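/- arXiv:1903.08123 — 8 statements merged into one kernel-verified Lean document; each statement's English description precedes it below -/
import Mathlib

section
/- Let G be a finitely generated metabelian group (i.e., the commutator subgroup [G,G] is abelian) with finite generating set S, and suppose there is a nontrivial element x ∈ Fitt(G) that is strictly exponentially distorted with respect to S. Then n ≼ F_{G,S}(n). -/
open Function
open scoped ENNReal NNReal

/-- Word length with respect to a finite generating set `S`. -/
noncomputable def wordLength {G : Type*} [Group G] (S : Finset G) (x : G) : ℕ :=
  sInf {n | ∃ l : List G, (∀ g ∈ l, g ∈ S ∨ g⁻¹ ∈ S) ∧ l.length = n ∧ l.prod = x}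

/-- The depth of an element: the minimal order of a finite quotient witnessing it. -/
noncomputable def depth {G : Type*} [Group G] (x : G) : ℕ∞ :=
  sInf {d : ℕ∞ | ∃ (H : Type) (_ : Group H) (_ : Fintype H) (φ : G →* H),
    Surjective φ ∧ φ x ≠ 1 ∧ (Fintype.card H : ℕ∞) = d}

/-- The residual finiteness growth function `F_{G,S}`. -/
noncomputable def rfGrowth {G : Type*} [Group G] (S : Finset G) (n : ℕ) : ℕ∞ :=
  sSup {d : ℕ∞ | ∃ x : G, x ≠ 1 ∧ wordLength S x ≤ n ∧ depth x = d}

/-- Residual finiteness. -/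
def ResiduallyFinite (G : Type*) [Group G] : Prop :=
  ∀ x : G, x ≠ 1 → ∃ (H : Type) (_ : Group H) (_ : Fintype H) (φ : G →* H),
    Surjective φ ∧ φ x ≠ 1

/-- Strict `f`-distortion of an element. -/
def StrictlyDistorted {G : Type*} [Group G] (S : Finset G) (f : ℕ → ℕ) (x : G) : Prop :=
  ∃ C₁ C₂ : ℝ, 0 < C₁ ∧ 0 < C₂ ∧ ∀ n : ℤ, n ≠ 0 →
    C₁ * |(n : ℝ)| ≤ (f (wordLength S (x ^ n)) : ℝ) ∧
      (f (wordLength S (x ^ n)) : ℝ) ≤ C₂ * |(n : ℝ)|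

/-- The Fitting subgroup: the subgroup generated by all nilpotent normal subgroups. -/
def fitt (G : Type*) [Group G] : Subgroup G :=
  ⨆ (N : Subgroup G) (_ : N.Normal) (_ : Group.IsNilpotent N), N

/-- Virtually nilpotent groups. -/
def VirtuallyNilpotent (G : Type*) [Group G] : Prop :=
  ∃ H : Subgroup G, H.FiniteIndex ∧ Group.IsNilpotent H

/-!
Since `lcm(1, …, n) ≤ 2 ^ (9 n)` (Chebyshev's bound on `ψ`), strict exponential distortion gives
the element `x ^ lcm(1, …, n)` word length `O(n)`. It is nontrivial, because distortion forces `x`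
to have infinite order, but it dies in every group of order at most `n`, as the order of every
element there divides `lcm(1, …, n)`. Hence its depth exceeds `n`.
-/

theorem Nat.lcmUpto_le_two_pow (n : ℕ) : n.lcmUpto ≤ 2 ^ (9 * n) := by
  have hlog : Real.log n.lcmUpto ≤ Real.log (2 ^ (9 * n) : ℕ) := by
    rw [← Chebyshev.psi_eq_log_lcmUpto, Nat.cast_pow, Real.log_pow, Nat.cast_ofNat]
    have h4 : Real.log 4 = 2 * Real.log 2 := by
      rw [show (4 : ℝ) = 2 ^ 2 by norm_num, Real.log_pow, Nat.cast_ofNat]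
    calc Chebyshev.psi n ≤ (Real.log 4 + 4) * n := Chebyshev.psi_le_const_mul_self n.cast_nonneg
      _ ≤ ((9 * n : ℕ) : ℝ) * Real.log 2 := by
        rw [h4]; push_cast
        nlinarith [Real.log_two_gt_d9, (n.cast_nonneg : (0 : ℝ) ≤ n)]
  exact_mod_cast (Real.log_le_log_iff (by exact_mod_cast n.lcmUpto_pos) (by positivity)).mp hlog

theorem pow_lcmUpto_eq_one {H : Type*} [Group H] [Fintype H] {n : ℕ}
    (hn : Fintype.card H ≤ n) (y : H) : y ^ n.lcmUpto = 1 :=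
  orderOf_dvd_iff_pow_eq_one.mp <| Finset.dvd_lcm (f := id) <|
    Finset.mem_Icc.mpr ⟨orderOf_pos y, orderOf_le_card_univ.trans hn⟩

theorem lt_depth_pow_lcmUpto {G : Type*} [Group G] (x : G) (n : ℕ) :
    (n : ℕ∞) < depth (x ^ n.lcmUpto) := by
  refine (ENat.add_one_le_iff (ENat.natCast_ne_top n)).mp (le_sInf ?_)
  rintro d ⟨H, _, _, φ, -, hφ, rfl⟩
  have hn : ¬ Fintype.card H ≤ n := fun hn => hφ (by rw [map_pow, pow_lcmUpto_eq_one hn])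
  exact_mod_cast Nat.succ_le_of_lt (not_le.mp hn)

theorem wordLength_one {G : Type*} [Group G] (S : Finset G) : wordLength S 1 = 0 :=
  Nat.sInf_eq_zero.mpr <| .inl ⟨[], by simp, rfl, List.prod_nil⟩

namespace StrictlyDistorted

variable {G : Type*} [Group G] {S : Finset G} {f : ℕ → ℕ} {x : G}

theorem orderOf_eq_zero (h : StrictlyDistorted S f x) : orderOf x = 0 := by
  obtain ⟨C₁, _, hC₁, -, hC⟩ := h
  by_contra hx
  obtain ⟨k, hk⟩ := exists_nat_gt ((f 0 : ℝ) / C₁)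
  have hmk : (orderOf x * (k + 1) : ℤ) ≠ 0 := by positivity
  have := (hC _ hmk).1
  rw [zpow_mul, zpow_natCast, pow_orderOf_eq_one, one_zpow, wordLength_one] at this
  push_cast at this
  rw [abs_of_nonneg (by positivity)] at this
  have hm : (1 : ℝ) ≤ orderOf x := by exact_mod_cast Nat.one_le_iff_ne_zero.mpr hx
  rw [div_lt_iff₀ hC₁] at hk
  nlinarith

theorem exists_le_mul (h : StrictlyDistorted S f x) :
    ∃ D : ℕ, ∀ m : ℕ, 0 < m → f (wordLength S (x ^ m)) ≤ D * m := by
  obtain ⟨_, C₂, -, -, hC⟩ := h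
  refine ⟨⌈C₂⌉₊, fun m hm => ?_⟩
  have := (hC m (by positivity)).2
  rw [zpow_natCast, Int.cast_natCast, Nat.abs_cast] at this
  exact_mod_cast this.trans (mul_le_mul_of_nonneg_right (Nat.le_ceil C₂) m.cast_nonneg)

theorem exists_wordLength_pow_lcmUpto_le (h : StrictlyDistorted S (2 ^ ·) x) :
    ∃ A : ℕ, ∀ n : ℕ, wordLength S (x ^ n.lcmUpto) ≤ A + 9 * n := by
  obtain ⟨D, hD⟩ := h.exists_le_mul
  refine ⟨D, fun n => (Nat.pow_le_pow_iff_right one_lt_two).mp ?_⟩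
  calc 2 ^ wordLength S (x ^ n.lcmUpto) ≤ D * n.lcmUpto := hD _ n.lcmUpto_pos
    _ ≤ 2 ^ D * 2 ^ (9 * n) := Nat.mul_le_mul D.lt_two_pow_self.le n.lcmUpto_le_two_pow
    _ = 2 ^ (D + 9 * n) := (pow_add 2 D (9 * n)).symm

end StrictlyDistorted

theorem metabelian_lower_bound_general {G : Type*} [Group G] (S : Finset G)
    (x : G)
    (hdist : StrictlyDistorted S (fun n => 2 ^ n) x) :
    ∃ C : ℕ, 0 < C ∧ ∀ n : ℕ, (n : ℕ∞) ≤ (C : ℕ∞) * rfGrowth S (C * n) := by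
  obtain ⟨A, hA⟩ := hdist.exists_wordLength_pow_lcmUpto_le
  refine ⟨A + 9, by omega, fun n => ?_⟩
  rcases n.eq_zero_or_pos with rfl | hn
  · simp
  have hy : x ^ n.lcmUpto ≠ 1 := orderOf_eq_zero_iff'.mp hdist.orderOf_eq_zero _ n.lcmUpto_pos
  have hlen : wordLength S (x ^ n.lcmUpto) ≤ (A + 9) * n := (hA n).trans (by nlinarith)
  calc (n : ℕ∞) ≤ depth (x ^ n.lcmUpto) := (lt_depth_pow_lcmUpto x n).le
    _ ≤ rfGrowth S ((A + 9) * n) := le_sSup ⟨_, hy, hlen, rfl⟩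
    _ ≤ _ := le_mul_of_one_le_left' (by exact_mod_cast Nat.succ_pos (A + 8))

/-- if `G` is a finitely generated metabelian group with a nontrivial strictly
exponentially distorted element `x ∈ Fitt(G)`, then `n ≼ F_{G,S}(n)`. -/
theorem metabelian_lower_bound {G : Type*} [Group G] (S : Finset G)
    (hgen : Subgroup.closure (S : Set G) = ⊤)
    (hmeta : ∀ a ∈ commutator G, ∀ b ∈ commutator G, a * b = b * a)
    (x : G) (hx : x ≠ 1) (hxFitt : x ∈ fitt G)
    (hdist : StrictlyDistorted S (fun n => 2 ^ n) x) :
    ∃ C : ℕ, 0 < C ∧ ∀ n : ℕ, (n : ℕ∞) ≤ (C : ℕ∞) * rfGrowth S (C * n) :=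
  metabelian_lower_bound_general S x hdist
end

section
/- For every integer m > 1, the metabelian Baumslag–Solitar group BS(1,m) = ⟨a, t | t a t⁻¹ = aᵐ⟩, with generating set S = {a, t}, satisfies n ≼ F_{BS(1,m),S}(n): there is a constant C > 0 such that for every n ≥ 1 there is a nontrivial element g of word length at most C·n such that every finite group H admitting a surjective homomorphism φ: BS(1,m) → H with φ(g) ≠ 1 satisfies |H| ≥ n/C. -/
open Function

/-- The defining relation `t a t⁻¹ a⁻ᵐ` of `BS(1,m)`, with `false ↦ a` and `true ↦ t`. -/
def BSRel (m : ℕ) : Set (FreeGroup Bool) :=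
  {FreeGroup.of true * FreeGroup.of false * (FreeGroup.of true)⁻¹ *
    (FreeGroup.of false) ^ (-(m : ℤ))}

/-- The Baumslag–Solitar group `BS(1,m) = ⟨a, t ∣ t a t⁻¹ = aᵐ⟩`. -/
def BS (m : ℕ) : Type := PresentedGroup (BSRel m)

instance (m : ℕ) : Group (BS m) := by unfold BS; infer_instance

/-- The generator `a` of `BS(1,m)`. -/
def BSa (m : ℕ) : BS m := PresentedGroup.of false

/-- The generator `t` of `BS(1,m)`. -/
def BSt (m : ℕ) : BS m := PresentedGroup.of true

/-- The generating set `S = {a, t}` of `BS(1,m)`. -/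
noncomputable def BSGenSet (m : ℕ) : Finset (BS m) :=
  letI := Classical.decEq (BS m)
  {BSa m, BSt m}

/-!
Take `s = ⌊√n⌋` and `g = a ^ N` with `N = ∏_{f = 1}^{s} (m ^ f - 1)`. Since `N < m ^ (s * s)`, writing
`N` in base `m` gives `‖g‖ ≤ (m + 2) s² ≤ (m + 2) n`; and `a` has infinite order, so `g ≠ 1`.
If `φ : BS(1,m) → H` does not kill `g`, the order `d` of `φ a` does not divide `N`, so the
multiplicative order `f` of `m` modulo `d` exceeds `s`, while `f < d`. As `φ t` acts on `⟨φ a⟩` by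
`x ↦ x ^ m`, the cosets of `⟨φ a⟩` containing `φ t ^ j`, `j < f`, are distinct, so
`|H| ≥ f · d > (s + 1)² > n`.
-/

open Finset

section WordBall

variable {G : Type*} [Group G] (S : Finset G)

/- Sublevel sets of `wordLength`, witnessed by an explicit word: `wordLength` is a junk `0` on
elements outside the subgroup generated by `S`, so upper bounds go through this set. -/
def wordBall (k : ℕ) : Set G :=
  {x | ∃ l : List G, (∀ g ∈ l, g ∈ S ∨ g⁻¹ ∈ S) ∧ l.length ≤ k ∧ l.prod = x}

variable {S}

theorem wordLength_le_of_mem_wordBall {k : ℕ} {x : G} (hx : x ∈ wordBall S k) :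
    wordLength S x ≤ k := by
  obtain ⟨l, hl, hlen, rfl⟩ := hx
  refine (Nat.sInf_le ?_).trans hlen
  exact ⟨l, hl, rfl, rfl⟩

theorem one_mem_wordBall (k : ℕ) : (1 : G) ∈ wordBall S k := by
  exact ⟨[], by simp, by simp, rfl⟩

theorem mem_wordBall_one_of_mem {g : G} (hg : g ∈ S) : g ∈ wordBall S 1 := by
  exact ⟨[g], by simp [hg], by simp, by simp⟩

theorem inv_mem_wordBall_one_of_mem {g : G} (hg : g ∈ S) : g⁻¹ ∈ wordBall S 1 := by
  exact ⟨[g⁻¹], by simp [hg], by simp, by simp⟩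

theorem mul_mem_wordBall {k k' : ℕ} {x y : G} (hx : x ∈ wordBall S k) (hy : y ∈ wordBall S k') :
    x * y ∈ wordBall S (k + k') := by
  obtain ⟨l, hl, hlen, rfl⟩ := hx
  obtain ⟨l', hl', hlen', rfl⟩ := hy
  refine ⟨l ++ l', ?_, ?_, List.prod_append⟩
  · simp only [List.mem_append]
    rintro g (hg | hg)
    exacts [hl g hg, hl' g hg]
  · simp only [List.length_append]
    omega

theorem wordBall_mono {k k' : ℕ} (h : k ≤ k') : wordBall S k ⊆ wordBall S k' := by
  rintro x ⟨l, hl, hlen, rfl⟩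
  exact ⟨l, hl, hlen.trans h, rfl⟩

theorem pow_mem_wordBall {k : ℕ} {x : G} (hx : x ∈ wordBall S k) (r : ℕ) :
    x ^ r ∈ wordBall S (r * k) := by
  induction r with
  | zero => simpa using one_mem_wordBall 0
  | succ r ih => simpa [pow_succ, add_mul] using mul_mem_wordBall ih hx

end WordBall

def prodPowSubOne (m s : ℕ) : ℕ := ∏ f ∈ Icc 1 s, (m ^ f - 1)

theorem pow_sub_one_pos_of_mem_Icc {m s f : ℕ} (hm : 1 < m) (hf : f ∈ Icc 1 s) :
    0 < m ^ f - 1 :=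
  Nat.sub_pos_of_lt (Nat.one_lt_pow (by grind) hm)

theorem prodPowSubOne_pos {m : ℕ} (hm : 1 < m) (s : ℕ) : 0 < prodPowSubOne m s :=
  prod_pos fun _ hf => pow_sub_one_pos_of_mem_Icc hm hf

theorem prodPowSubOne_lt_pow {m s : ℕ} (hm : 1 < m) (hs : 0 < s) :
    prodPowSubOne m s < m ^ (s * s) :=
  calc ∏ f ∈ Icc 1 s, (m ^ f - 1)
      < ∏ _f ∈ Icc 1 s, m ^ s := by
        refine prod_lt_prod_of_nonempty (fun _ hf => ?_) (fun _ hf => ?_) (nonempty_Icc.mpr hs)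
        · exact pow_sub_one_pos_of_mem_Icc hm hf
        · exact (Nat.sub_lt (by positivity) one_pos).trans_le
            (Nat.pow_le_pow_right (by omega) (mem_Icc.mp hf).2)
    _ = m ^ (s * s) := by rw [prod_const, Nat.card_Icc, Nat.add_sub_cancel, ← pow_mul]

theorem lt_orderOf_of_not_dvd_prodPowSubOne {m d s : ℕ} (hm : 0 < m)
    (hfin : IsOfFinOrder (m : ZMod d)) (h : ¬ d ∣ prodPowSubOne m s) :
    s < orderOf (m : ZMod d) := by
  by_contra! hle
  have hdvd : d ∣ m ^ orderOf (m : ZMod d) - 1 := by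
    rw [← ZMod.natCast_eq_zero_iff, Nat.cast_sub (Nat.one_le_pow _ _ hm), Nat.cast_pow,
      pow_orderOf_eq_one, Nat.cast_one, sub_self]
  exact h (hdvd.trans (dvd_prod_of_mem _ (mem_Icc.mpr ⟨hfin.orderOf_pos, hle⟩)))

section ConjPow

variable {G : Type*} [Group G] {x t : G} {m : ℕ}

theorem conj_pow_eq_pow_mul (h : t * x * t⁻¹ = x ^ m) (q : ℕ) :
    t * x ^ q * t⁻¹ = x ^ (m * q) := by
  rw [← MulAut.conj_apply, map_pow, MulAut.conj_apply, h, pow_mul]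

theorem pow_conj_eq_pow_pow (h : t * x * t⁻¹ = x ^ m) (k : ℕ) :
    t ^ k * x * (t ^ k)⁻¹ = x ^ (m ^ k) := by
  induction k with
  | zero => simp
  | succ k ih =>
    calc t ^ (k + 1) * x * (t ^ (k + 1))⁻¹ = t * (t ^ k * x * (t ^ k)⁻¹) * t⁻¹ := by group
      _ = x ^ (m ^ (k + 1)) := by rw [ih, conj_pow_eq_pow_mul h, pow_succ']

theorem pow_eq_self_iff_natCast_eq_one (x : G) (n : ℕ) :
    x ^ n = x ↔ (n : ZMod (orderOf x)) = 1 := by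
  rw [← Nat.cast_one, ZMod.natCast_eq_natCast_iff, ← pow_eq_pow_iff_modEq, pow_one]

theorem isOfFinOrder_natCast_of_conj (h : t * x * t⁻¹ = x ^ m) (ht : IsOfFinOrder t) :
    IsOfFinOrder (m : ZMod (orderOf x)) := by
  refine isOfFinOrder_iff_pow_eq_one.mpr ⟨orderOf t, ht.orderOf_pos, ?_⟩
  have hx := pow_conj_eq_pow_pow h (orderOf t)
  rw [pow_orderOf_eq_one, one_mul, inv_one, mul_one, eq_comm,
    pow_eq_self_iff_natCast_eq_one, Nat.cast_pow] at hx
  exact hx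

/- The powers `t ^ j`, `j < orderOf (m : ZMod (orderOf x))`, lie in distinct cosets of `⟨x⟩`:
a power of `t` inside `⟨x⟩` commutes with `x`, and `t ^ k` conjugates `x` to `x ^ (m ^ k)`. -/
theorem orderOf_natCast_mul_orderOf_le_card [Finite G] (h : t * x * t⁻¹ = x ^ m) :
    orderOf (m : ZMod (orderOf x)) * orderOf x ≤ Nat.card G := by
  set f := orderOf (m : ZMod (orderOf x))
  have hcoset : ∀ i j : Fin f, (i : ℕ) ≤ j →
      ((t ^ (i : ℕ) : G) : G ⧸ Subgroup.zpowers x) = (t ^ (j : ℕ) : G) → i = j := by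
    intro i j hij heq
    have hmem : t ^ ((j : ℕ) - i) ∈ Subgroup.zpowers x := by
      rwa [QuotientGroup.eq, (Commute.pow_pow_self t i j).inv_left.eq, ← pow_sub _ hij] at heq
    obtain ⟨z, hz⟩ := Subgroup.mem_zpowers_iff.mp hmem
    have hfix : x ^ (m ^ ((j : ℕ) - i)) = x := by
      rw [← pow_conj_eq_pow_pow h, ← hz]; group
    rw [pow_eq_self_iff_natCast_eq_one, Nat.cast_pow, ← orderOf_dvd_iff_pow_eq_one] at hfix
    have := Nat.eq_zero_of_dvd_of_lt hfix (by omega)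
    exact Fin.ext (by omega)
  have hinj : Injective fun j : Fin f => ((t ^ (j : ℕ) : G) : G ⧸ Subgroup.zpowers x) := by
    intro i j hij
    rcases Nat.le_total i j with hle | hle
    exacts [hcoset i j hle hij, (hcoset j i hle hij.symm).symm]
  have hindex : f ≤ (Subgroup.zpowers x).index := by
    simpa [Subgroup.index] using Nat.card_le_card_of_injective _ hinj
  calc f * orderOf x ≤ (Subgroup.zpowers x).index * orderOf x := Nat.mul_le_mul_right _ hindex
    _ = Nat.card G := by rw [← Nat.card_zpowers, Subgroup.index_mul_card]

theorem sq_lt_card_of_not_orderOf_dvd_prodPowSubOne [Finite G] {s : ℕ} (hm : 0 < m)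
    (h : t * x * t⁻¹ = x ^ m)
    (hx : ¬ orderOf x ∣ prodPowSubOne m s) : (s + 1) ^ 2 < Nat.card G := by
  have hd : 1 < orderOf x := by
    have hd1 : orderOf x ≠ 1 := fun hd1 => hx (hd1 ▸ one_dvd _)
    have := orderOf_pos x
    omega
  have hsf := lt_orderOf_of_not_dvd_prodPowSubOne hm
    (isOfFinOrder_natCast_of_conj h (isOfFinOrder_of_finite t)) hx
  have hfd := ZMod.orderOf_lt hd (m : ZMod (orderOf x))
  calc (s + 1) ^ 2 < (s + 1) * (s + 2) := by nlinarith
    _ ≤ orderOf (m : ZMod (orderOf x)) * orderOf x := Nat.mul_le_mul (by omega) (by omega)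
    _ ≤ Nat.card G := orderOf_natCast_mul_orderOf_le_card h

end ConjPow

namespace BS

variable {m : ℕ}

theorem t_mul_a_mul_t_inv (m : ℕ) : BSt m * BSa m * (BSt m)⁻¹ = BSa m ^ m := by
  have h : PresentedGroup.mk (BSRel m) (FreeGroup.of true * FreeGroup.of false *
      (FreeGroup.of true)⁻¹ * FreeGroup.of false ^ (-(m : ℤ))) = 1 :=
    (QuotientGroup.eq_one_iff _).mpr (Subgroup.subset_normalClosure rfl)
  rw [map_mul, map_zpow, zpow_neg, zpow_natCast, mul_inv_eq_one] at h
  exact h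

def lift {H : Type*} [Group H] {x t : H} (h : t * x * t⁻¹ = x ^ m) : BS m →* H :=
  PresentedGroup.toGroup (f := fun b => if b then t else x) <| by
    rintro r rfl
    simp [h]

theorem lift_a {H : Type*} [Group H] {x t : H} (h : t * x * t⁻¹ = x ^ m) :
    lift h (BSa m) = x :=
  PresentedGroup.toGroup.of _

-- `a` acts on `ℚ` as `y ↦ y + 1` and `t` as `y ↦ m * y`.
theorem orderOf_a (hm : 0 < m) : orderOf (BSa m) = 0 := by
  have hrel : Equiv.mulLeft₀ (m : ℚ) (by positivity) * Equiv.addRight 1 *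
      (Equiv.mulLeft₀ (m : ℚ) (by positivity))⁻¹ = Equiv.addRight 1 ^ m := by
    ext y
    simp only [Equiv.Perm.mul_apply, Equiv.Perm.coe_inv, Equiv.mulLeft₀_symm_apply,
      Equiv.coe_addRight, Equiv.mulLeft₀_apply, Equiv.nsmul_addRight, nsmul_eq_mul, mul_one]
    field_simp
  refine orderOf_eq_zero_iff'.mpr fun N hN hpow => ?_
  have := congrArg (fun σ => σ 0) (congrArg (lift hrel) hpow)
  simp only [map_pow, lift_a, Equiv.nsmul_addRight, nsmul_eq_mul, mul_one, Equiv.coe_addRight,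
    zero_add, map_one, Equiv.Perm.coe_one, id_eq, Nat.cast_eq_zero] at this
  omega

theorem a_mem_genSet : BSa m ∈ BSGenSet m := by
  classical
  simp [BSGenSet]

theorem t_mem_genSet : BSt m ∈ BSGenSet m := by
  classical
  simp [BSGenSet]

-- Base-`m` expansion: `a ^ N = a ^ (N % m) * t * a ^ (N / m) * t⁻¹`.
theorem a_pow_mem_wordBall (hm : 0 < m) {j N : ℕ} (hN : N < m ^ j) :
    BSa m ^ N ∈ wordBall (BSGenSet m) ((m + 2) * j) := by
  induction j generalizing N with
  | zero => simp_all [one_mem_wordBall]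
  | succ j ih =>
    have hdigit : BSa m ^ (N % m) ∈ wordBall (BSGenSet m) m :=
      wordBall_mono (by simpa using (Nat.mod_lt N hm).le)
        (pow_mem_wordBall (mem_wordBall_one_of_mem a_mem_genSet) _)
    have hquot := ih (N := N / m) (by rw [Nat.div_lt_iff_lt_mul hm, ← pow_succ]; exact hN)
    have hsplit : BSa m ^ N = BSa m ^ (N % m) * (BSt m * BSa m ^ (N / m) * (BSt m)⁻¹) := by
      rw [conj_pow_eq_pow_mul (t_mul_a_mul_t_inv m), ← pow_add, Nat.mod_add_div]
    rw [hsplit]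
    refine wordBall_mono ?_ (mul_mem_wordBall hdigit (mul_mem_wordBall
      (mul_mem_wordBall (mem_wordBall_one_of_mem t_mem_genSet) hquot)
      (inv_mem_wordBall_one_of_mem t_mem_genSet)))
    nlinarith

end BS

/-- for `m > 1`, the Baumslag–Solitar group `BS(1,m)` satisfies
`n ≼ F_{BS(1,m),S}(n)` with `S = {a, t}`. -/
theorem BS_lower_bound (m : ℕ) (hm : 1 < m) :
    ∃ C : ℝ, 0 < C ∧ ∀ n : ℕ, 1 ≤ n →
      ∃ g : BS m, g ≠ 1 ∧ (wordLength (BSGenSet m) g : ℝ) ≤ C * n ∧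
        ∀ (H : Type) [Group H] [Fintype H] (φ : BS m →* H),
          Surjective φ → φ g ≠ 1 → (n : ℝ) / C ≤ Fintype.card H := by
  refine ⟨m + 2, by positivity, fun n hn => ?_⟩
  set s := Nat.sqrt n
  have hs : 0 < s := Nat.sqrt_pos.mpr hn
  refine ⟨BSa m ^ prodPowSubOne m s,
    orderOf_eq_zero_iff'.mp (BS.orderOf_a (by omega)) _ (prodPowSubOne_pos hm s), ?_, ?_⟩
  · have hball := wordBall_mono (Nat.mul_le_mul_left (m + 2) (Nat.sqrt_le n))
      (BS.a_pow_mem_wordBall (by omega) (prodPowSubOne_lt_pow hm hs))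
    exact_mod_cast wordLength_le_of_mem_wordBall hball
  · intro H _ _ φ _ hφ
    have hrel : φ (BSt m) * φ (BSa m) * (φ (BSt m))⁻¹ = φ (BSa m) ^ m := by
      simp only [← map_inv, ← map_mul, ← map_pow, BS.t_mul_a_mul_t_inv]
    have hdvd : ¬ orderOf (φ (BSa m)) ∣ prodPowSubOne m s := by
      rwa [orderOf_dvd_iff_pow_eq_one, ← map_pow]
    have hcard := sq_lt_card_of_not_orderOf_dvd_prodPowSubOne (by omega) hrel hdvd
    rw [Nat.card_eq_fintype_card] at hcard
    calc (n : ℝ) / (m + 2) ≤ n := div_le_self n.cast_nonneg (by linarith)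
      _ ≤ Fintype.card H := by exact_mod_cast ((Nat.lt_succ_sqrt' n).trans hcard).le
end

section
/- Let G be a residually finite, finitely generated solvable group (with finite generating set S) of infinite Prüfer rank, and suppose there is a nontrivial infinite-order element x ∈ Fitt(G) that is strictly f-distorted for some nondecreasing f: ℕ → ℕ with 2^n ≼ f(n) ≼ 2^(2^n). Then n ≼ F_{G,S}(n). Moreover, if x has nilpotent depth m > 1, i.e., there is a nilpotent normal subgroup N of G with ⟨x⟩ ∩ γ_m(N) ≠ {1}, then n^(m+1) ≼ F_{G,S}(n). -/
open Function
open scoped ENNReal NNReal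

/-- `γ_m(N)` (with `γ_1(N) = N`) as a subgroup of the ambient group. -/
def gammaSub {G : Type*} [Group G] (N : Subgroup G) (m : ℕ) : Subgroup G :=
  ((⊤ : Subgroup ↥N).lowerCentralSeries (m - 1)).map N.subtype

/-- A finitely generated group has infinite Prüfer rank if there is no `r` such that every
finitely generated subgroup can be generated by `r` elements. -/
def InfinitePruferRank (G : Type*) [Group G] : Prop :=
  ¬ ∃ r : ℕ, ∀ H : Subgroup G, H.FG →
    ∃ T : Finset G, T.card ≤ r ∧ Subgroup.closure (T : Set G) = H


theorem Nat.dvd_lcmUpto {d n : ℕ} (hd : 0 < d) (hdn : d ≤ n) : d ∣ n.lcmUpto :=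
  Finset.dvd_lcm (Finset.mem_Icc.mpr ⟨hd, hdn⟩)

theorem lt_mul_of_apply_le_mul_two_pow {f : ℕ → ℕ} (hf : Monotone f) {C : ℕ}
    (hC : ∀ j, 2 ^ j ≤ C * f (C * j)) {w D r : ℕ} (hw : f w ≤ D * 2 ^ r) :
    w < C * (C * D + r) := by
  have hC0 : 0 < C := Nat.pos_of_ne_zero fun h => by simpa [h] using hC 0
  have hj : 2 ^ (w / C) < 2 ^ (C * D + r) :=
    calc 2 ^ (w / C) ≤ C * f (C * (w / C)) := hC _
      _ ≤ C * (D * 2 ^ r) := Nat.mul_le_mul_left C ((hf (Nat.mul_div_le w C)).trans hw)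
      _ = C * D * 2 ^ r := (Nat.mul_assoc ..).symm
      _ < 2 ^ (C * D) * 2 ^ r := Nat.mul_lt_mul_of_pos_right Nat.lt_two_pow_self (by positivity)
      _ = 2 ^ (C * D + r) := (pow_add ..).symm
  calc w < C * (w / C + 1) := Nat.lt_mul_div_succ w hC0
    _ ≤ C * (C * D + r) :=
      Nat.mul_le_mul_left C ((Nat.pow_lt_pow_iff_right (by norm_num)).mp hj)

theorem StrictlyDistorted.exists_wordLength_pow_le {G : Type*} [Group G] {S : Finset G}
    {f : ℕ → ℕ} {x : G} (hdist : StrictlyDistorted S f x) (hf : Monotone f) {C : ℕ}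
    (hC : ∀ j, 2 ^ j ≤ C * f (C * j)) :
    ∃ A, ∀ t r : ℕ, t ≠ 0 → t ≤ 2 ^ r → wordLength S (x ^ t) ≤ A * (r + 1) := by
  obtain ⟨C₁, C₂, -, -, hC₁₂⟩ := hdist
  refine ⟨C * (C * ⌈C₂⌉₊ + 1), fun t r ht htr => ?_⟩
  have hupper := (hC₁₂ t (by exact_mod_cast ht)).2
  rw [zpow_natCast, Int.cast_natCast, Nat.abs_cast] at hupper
  have hw : f (wordLength S (x ^ t)) ≤ ⌈C₂⌉₊ * 2 ^ r := by
    have : (f (wordLength S (x ^ t)) : ℝ) ≤ ⌈C₂⌉₊ * 2 ^ r :=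
      hupper.trans (mul_le_mul (Nat.le_ceil C₂) (mod_cast htr) t.cast_nonneg (by positivity))
    exact_mod_cast this
  calc wordLength S (x ^ t) ≤ C * (C * ⌈C₂⌉₊ + r) :=
        (lt_mul_of_apply_le_mul_two_pow hf hC hw).le
    _ ≤ C * (C * ⌈C₂⌉₊ + 1) * (r + 1) := by
        rw [Nat.mul_assoc]
        gcongr
        nlinarith [Nat.zero_le (C * ⌈C₂⌉₊ * r)]

namespace Subgroup

variable {P : Type*} [Group P]

theorem map_mem_lowerCentralSeries {K : Type*} [Group K] (f : P →* K) {n : ℕ} {g : P}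
    (hg : g ∈ (⊤ : Subgroup P).lowerCentralSeries n) :
    f g ∈ (⊤ : Subgroup K).lowerCentralSeries n := by
  have hfg := mem_map_of_mem f hg
  rw [map_lowerCentralSeries] at hfg
  exact lowerCentralSeries_mono n le_top hfg

theorem lowerCentralSeries_eq_bot_of_succ_eq [Group.IsNilpotent P] {i : ℕ}
    (h : (⊤ : Subgroup P).lowerCentralSeries (i + 1) = (⊤ : Subgroup P).lowerCentralSeries i) :
    (⊤ : Subgroup P).lowerCentralSeries i = ⊥ := by
  have hstable : ∀ j, (⊤ : Subgroup P).lowerCentralSeries (i + j) =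
      (⊤ : Subgroup P).lowerCentralSeries i := by
    intro j
    induction j with
    | zero => rfl
    | succ j ih =>
      rw [← Nat.add_assoc, lowerCentralSeries_succ, ih, ← lowerCentralSeries_succ, h]
  obtain ⟨c, hc⟩ := nilpotent_iff_lowerCentralSeries.mp ‹_›
  rw [← hstable c, eq_bot_iff, ← hc]
  exact lowerCentralSeries_antitone _ (Nat.le_add_left c i)

theorem lowerCentralSeries_one_eq_bot_of_isCyclic [Group.IsNilpotent P]
    [IsCyclic (P ⧸ (⊤ : Subgroup P).lowerCentralSeries 1)] :
    (⊤ : Subgroup P).lowerCentralSeries 1 = ⊥ := by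
  set γ₁ := (⊤ : Subgroup P).lowerCentralSeries 1
  set γ₂ := (⊤ : Subgroup P).lowerCentralSeries 2
  have hγ : γ₂ ≤ γ₁ := lowerCentralSeries_antitone _ (by norm_num)
  -- `γ₁ / γ₂` is central in `P / γ₂` with cyclic quotient `P / γ₁`, so `P / γ₂` is abelian
  let f : P ⧸ γ₂ →* P ⧸ γ₁ := QuotientGroup.map γ₂ γ₁ (MonoidHom.id P) hγ
  have hker : f.ker ≤ center (P ⧸ γ₂) := by
    intro q hq
    obtain ⟨g, rfl⟩ := QuotientGroup.mk'_surjective γ₂ q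
    replace hq : g ∈ γ₁ := (QuotientGroup.eq_one_iff g).mp hq
    refine mem_center_iff.mpr fun q' => ?_
    obtain ⟨h, rfl⟩ := QuotientGroup.mk'_surjective γ₂ q'
    rw [eq_comm, ← commutatorElement_eq_one_iff_mul_comm, ← map_commutatorElement,
      QuotientGroup.mk'_apply, QuotientGroup.eq_one_iff]
    exact commutator_mem_commutator hq (mem_top h)
  have := f.isMulCommutative_of_isCyclic_of_ker_le_center hker
  refine lowerCentralSeries_eq_bot_of_succ_eq (le_antisymm hγ ?_)
  exact Normal.quotient_commutative_iff_commutator_le.mp this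

theorem exists_pow_mem_of_zpowers_inf_ne_bot {x : P} {H : Subgroup P} (h : zpowers x ⊓ H ≠ ⊥) :
    ∃ e : ℕ, e ≠ 0 ∧ x ^ e ∈ H := by
  obtain ⟨_, hw, hw1⟩ := (bot_or_exists_ne_one _).resolve_left h
  obtain ⟨⟨z, rfl⟩, hzH⟩ := mem_inf.mp hw
  refine ⟨z.natAbs, fun hz => hw1 (by simp [Int.natAbs_eq_zero.mp hz]), ?_⟩
  rcases Int.natAbs_eq z with hz | hz
  · rwa [← zpow_natCast, ← hz]
  · rw [← zpow_natCast, ← neg_neg (z.natAbs : ℤ), ← hz, zpow_neg]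
    exact inv_mem hzH

end Subgroup

theorem orderOf_map_of_coprime_card_ker {G H : Type*} [Group G] [Group H] (f : G →* H) {g : G}
    (hg : (orderOf g).Coprime (Nat.card f.ker)) : orderOf (f g) = orderOf g := by
  refine Nat.dvd_antisymm (orderOf_map_dvd f g) (orderOf_dvd_of_pow_eq_one ?_)
  have hmem : g ^ orderOf (f g) ∈ f.ker := by
    rw [MonoidHom.mem_ker, map_pow, pow_orderOf_eq_one]
  have hdvd : orderOf (g ^ orderOf (f g)) ∣ Nat.card f.ker := by
    rw [← Subgroup.orderOf_mk _ hmem]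
    exact orderOf_dvd_natCard _
  exact orderOf_eq_one_iff.mp ((hg.coprime_dvd_left (orderOf_pow_dvd _)).eq_one_of_dvd hdvd)

theorem exists_orderOf_pow_eq_prime_pow {G : Type*} [Monoid G] {g : G} (hg : IsOfFinOrder g)
    {L : ℕ} (hL : L ≠ 0) (hgL : g ^ L ≠ 1) :
    ∃ p a i : ℕ, p.Prime ∧ L.factorization p < a ∧ orderOf (g ^ i) = p ^ a := by
  have hd : orderOf g ≠ 0 := hg.orderOf_pos.ne'
  obtain ⟨p, hp, hpL⟩ : ∃ p, p.Prime ∧ L.factorization p < (orderOf g).factorization p := by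
    by_contra! h
    exact hgL (orderOf_dvd_iff_pow_eq_one.mp ((Nat.factorization_prime_le_iff_dvd hd hL).mp h))
  refine ⟨p, _, orderOf g / p ^ (orderOf g).factorization p, hp, hpL, ?_⟩
  rw [orderOf_pow_of_dvd (Nat.ordCompl_pos p hd).ne' (Nat.ordCompl_dvd _ p),
    Nat.div_div_self (Nat.ordProj_dvd _ p) hd]

namespace IsPGroup

variable {p : ℕ} [Fact p.Prime] {P : Type*} [Group P] [Finite P]

theorem mul_card_le_card_of_lt (hP : IsPGroup p P) {H K : Subgroup P} (hHK : H < K) :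
    p * Nat.card H ≤ Nat.card K := by
  obtain ⟨a, ha⟩ := IsPGroup.iff_card.mp (hP.to_subgroup H)
  obtain ⟨b, hb⟩ := IsPGroup.iff_card.mp (hP.to_subgroup K)
  have hdvd : p ^ a ∣ p ^ b := ha ▸ hb ▸ Subgroup.card_dvd_of_le hHK.le
  have hne : a ≠ b := fun hab =>
    hHK.ne (Subgroup.eq_of_le_of_card_ge hHK.le (by rw [ha, hb, hab]))
  have hp := (Fact.out : p.Prime).one_lt
  rw [ha, hb, ← pow_succ']
  exact Nat.pow_le_pow_right (by omega)
    (lt_of_le_of_ne ((Nat.pow_dvd_pow_iff_le_right hp).mp hdvd) hne)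

theorem pow_mul_card_lowerCentralSeries_le (hP : IsPGroup p P) {j : ℕ} (hj : 1 ≤ j)
    (hne : (⊤ : Subgroup P).lowerCentralSeries j ≠ ⊥) :
    p ^ (j + 1) * Nat.card ((⊤ : Subgroup P).lowerCentralSeries j) ≤ Nat.card P := by
  have := hP.isNilpotent
  induction j, hj using Nat.le_induction with
  | base =>
    obtain ⟨c, hc⟩ := hP.index ((⊤ : Subgroup P).lowerCentralSeries 1)
    have hc2 : 2 ≤ c := by
      by_contra! hc2
      have : IsCyclic (P ⧸ (⊤ : Subgroup P).lowerCentralSeries 1) := by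
        refine isCyclic_of_card_dvd_prime (p := p) ?_
        rw [← Subgroup.index_eq_card, hc]
        simpa using pow_dvd_pow p (show c ≤ 1 by omega)
      exact hne Subgroup.lowerCentralSeries_one_eq_bot_of_isCyclic
    calc p ^ (1 + 1) * Nat.card ((⊤ : Subgroup P).lowerCentralSeries 1)
        ≤ p ^ c * Nat.card ((⊤ : Subgroup P).lowerCentralSeries 1) :=
          Nat.mul_le_mul_right _ (Nat.pow_le_pow_right (Fact.out : p.Prime).pos hc2)
      _ = Nat.card P := by rw [← hc, Nat.mul_comm, Subgroup.card_mul_index]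
  | succ j hj ih =>
    have hlt : (⊤ : Subgroup P).lowerCentralSeries (j + 1) <
        (⊤ : Subgroup P).lowerCentralSeries j :=
      lt_of_le_of_ne (Subgroup.lowerCentralSeries_antitone _ j.le_succ)
        fun h => hne (h ▸ Subgroup.lowerCentralSeries_eq_bot_of_succ_eq h)
    calc p ^ (j + 1 + 1) * Nat.card ((⊤ : Subgroup P).lowerCentralSeries (j + 1))
        = p ^ (j + 1) * (p * Nat.card ((⊤ : Subgroup P).lowerCentralSeries (j + 1))) := by ring
      _ ≤ p ^ (j + 1) * Nat.card ((⊤ : Subgroup P).lowerCentralSeries j) :=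
          Nat.mul_le_mul_left _ (hP.mul_card_le_card_of_lt hlt)
      _ ≤ Nat.card P := ih fun h => hne (eq_bot_iff.mpr (h ▸ hlt.le))

theorem pow_le_card_of_mem_lowerCentralSeries (hP : IsPGroup p P) {k a : ℕ} (hk : 1 ≤ k)
    {z : P} (hz : z ∈ (⊤ : Subgroup P).lowerCentralSeries k) (hza : orderOf z = p ^ a)
    (ha : a ≠ 0) : p ^ (a + k + 1) ≤ Nat.card P := by
  have hp := (Fact.out : p.Prime).one_lt
  have hz1 : z ≠ 1 := by
    rintro rfl
    exact ha (Nat.pow_right_injective hp (by simpa using hza.symm))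
  have hcard : p ^ a ≤ Nat.card ((⊤ : Subgroup P).lowerCentralSeries k) := by
    rw [← hza, ← Subgroup.orderOf_mk z hz]
    exact orderOf_le_card
  calc p ^ (a + k + 1) = p ^ (k + 1) * p ^ a := by ring
    _ ≤ p ^ (k + 1) * Nat.card ((⊤ : Subgroup P).lowerCentralSeries k) :=
        Nat.mul_le_mul_left _ hcard
    _ ≤ Nat.card P := hP.pow_mul_card_lowerCentralSeries_le hk
        ((Subgroup.ne_bot_iff_exists_ne_one).mpr ⟨⟨z, hz⟩, by simpa using hz1⟩)

end IsPGroup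

theorem Group.IsNilpotent.pow_le_card_of_mem_lowerCentralSeries {P : Type*} [Group P]
    [Finite P] [Group.IsNilpotent P] {p : ℕ} [Fact p.Prime] {k a : ℕ} (hk : 1 ≤ k) {z : P}
    (hz : z ∈ (⊤ : Subgroup P).lowerCentralSeries k) (hza : orderOf z = p ^ a) (ha : a ≠ 0) :
    p ^ (a + k + 1) ≤ Nat.card P := by
  induction hc : Nat.card P using Nat.strong_induction_on generalizing P with
  | _ c ih =>
    subst hc
    by_cases hP : IsPGroup p P
    · exact hP.pow_le_card_of_mem_lowerCentralSeries hk hz hza ha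
    -- the quotient by a Sylow `q`-subgroup, `q ≠ p`, is smaller and keeps the order of `z`
    obtain ⟨q, hq, hqP, hqp⟩ : ∃ q, q.Prime ∧ q ∣ Nat.card P ∧ q ≠ p := by
      by_contra! h
      exact hP (IsPGroup.of_card (Nat.eq_prime_pow_of_unique_prime_dvd Nat.card_pos.ne'
        fun hq hqP => h _ hq hqP))
    have := Fact.mk hq
    let Q : Sylow q P := default
    have hQ : Nat.card Q = q ^ (Nat.card P).factorization q := Q.card_eq_multiplicity
    have hzQ : orderOf (QuotientGroup.mk' (Q : Subgroup P) z) = p ^ a := by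
      refine (orderOf_map_of_coprime_card_ker _ ?_).trans hza
      rw [QuotientGroup.ker_mk', hQ, hza]
      exact Nat.Coprime.pow _ _ ((Nat.coprime_primes Fact.out hq).mpr hqp.symm)
    have hlt : Nat.card (P ⧸ (Q : Subgroup P)) < Nat.card P := by
      rw [Subgroup.card_eq_card_quotient_mul_card_subgroup (Q : Subgroup P), hQ]
      refine lt_mul_of_one_lt_right Nat.card_pos (Nat.one_lt_pow ?_ hq.one_lt)
      exact (hq.factorization_pos_of_dvd Nat.card_pos.ne' hqP).ne'
    exact (ih _ hlt (Subgroup.map_mem_lowerCentralSeries _ hz) hzQ rfl).trans hlt.le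

theorem Group.IsNilpotent.pow_le_card_of_pow_lcmUpto_ne_one {P : Type*} [Group P] [Finite P]
    [Group.IsNilpotent P] {k : ℕ} (hk : 1 ≤ k) {z : P}
    (hz : z ∈ (⊤ : Subgroup P).lowerCentralSeries k) {n : ℕ}
    (hzn : z ^ n.lcmUpto ^ (k + 2) ≠ 1) : (n + 1) ^ (k + 2) ≤ Nat.card P := by
  obtain ⟨p, a, i, hp, hpa, hzi⟩ := exists_orderOf_pow_eq_prime_pow (isOfFinOrder_of_finite z)
    (pow_ne_zero _ n.lcmUpto_ne_zero) hzn
  have := Fact.mk hp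
  rw [Nat.factorization_pow, Finsupp.smul_apply, smul_eq_mul, n.factorization_lcmUpto hp] at hpa
  calc (n + 1) ^ (k + 2) ≤ (p ^ (Nat.log p n + 1)) ^ (k + 2) :=
        Nat.pow_le_pow_left (Nat.lt_pow_succ_log_self hp.one_lt n) _
    _ = p ^ ((Nat.log p n + 1) * (k + 2)) := (pow_mul ..).symm
    _ ≤ p ^ (a + k + 1) := Nat.pow_le_pow_right hp.pos (by nlinarith)
    _ ≤ Nat.card P :=
        pow_le_card_of_mem_lowerCentralSeries hk (Subgroup.pow_mem _ hz i) hzi (by omega)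

section Depth

variable {G : Type*} [Group G]

theorem le_depth {g : G} {D : ℕ}
    (h : ∀ (H : Type) [Group H] [Fintype H] (φ : G →* H), φ g ≠ 1 → D ≤ Fintype.card H) :
    (D : ℕ∞) ≤ depth g := by
  refine le_sInf ?_
  rintro _ ⟨H, _, _, φ, -, hφ, rfl⟩
  exact_mod_cast h H φ hφ

theorem depth_le_rfGrowth (S : Finset G) {g : G} {n : ℕ} (hg : g ≠ 1)
    (hgn : wordLength S g ≤ n) : depth g ≤ rfGrowth S n :=
  le_sSup ⟨g, hg, hgn, rfl⟩

theorem le_depth_pow_lcmUpto (g : G) (n : ℕ) : ((n + 1 : ℕ) : ℕ∞) ≤ depth (g ^ n.lcmUpto) := by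
  refine le_depth fun H _ _ φ hφ => ?_
  by_contra! hcard
  apply hφ
  rw [map_pow, ← orderOf_dvd_iff_pow_eq_one]
  exact Nat.dvd_lcmUpto (orderOf_pos _)
    ((orderOf_le_card_univ).trans (Nat.lt_succ_iff.mp hcard))

theorem le_depth_pow_lcmUpto_of_mem_gammaSub {N : Subgroup G} (hN : Group.IsNilpotent N)
    {m : ℕ} (hm : 1 < m) {y : G} (hy : y ∈ gammaSub N m) (n : ℕ) :
    (((n + 1) ^ (m + 1) : ℕ) : ℕ∞) ≤ depth (y ^ n.lcmUpto ^ (m + 1)) := by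
  obtain ⟨k, rfl⟩ : ∃ k, m = k + 1 := ⟨m - 1, by omega⟩
  rw [gammaSub, Nat.add_sub_cancel] at hy
  obtain ⟨y₀, hy₀, rfl⟩ := Subgroup.mem_map.mp hy
  refine le_depth fun H _ _ φ hφ => ?_
  let ψ := φ.subgroupMap N
  have := Group.nilpotent_of_surjective ψ (φ.subgroupMap_surjective N)
  have hψ : ψ y₀ ^ n.lcmUpto ^ (k + 2) ≠ 1 := fun h =>
    hφ (by simpa [ψ] using congrArg Subtype.val h)
  calc (n + 1) ^ (k + 1 + 1) ≤ Nat.card (N.map φ) :=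
        Group.IsNilpotent.pow_le_card_of_pow_lcmUpto_ne_one (by omega)
          (Subgroup.map_mem_lowerCentralSeries ψ hy₀) hψ
    _ ≤ Fintype.card H := (Subgroup.card_le_card_group _).trans_eq Nat.card_eq_fintype_card

theorem exists_pow_le_rfGrowth (S : Finset G) {f : ℕ → ℕ} (hf : Monotone f) {C : ℕ}
    (hC : ∀ j, 2 ^ j ≤ C * f (C * j)) {x : G} (hx : ¬ IsOfFinOrder x)
    (hdist : StrictlyDistorted S f x) {e s k : ℕ} (he : e ≠ 0) (hk : k ≠ 0)
    (hdepth : ∀ n, 0 < n → (((n + 1) ^ k : ℕ) : ℕ∞) ≤ depth (x ^ (e * n.lcmUpto ^ s))) :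
    ∃ C, 0 < C ∧ ∀ n : ℕ, (n : ℕ∞) ^ k ≤ C * rfGrowth S (C * n) := by
  obtain ⟨A, hA⟩ := hdist.exists_wordLength_pow_le hf hC
  refine ⟨(A + 1) * (e + 9 * s + 1), by positivity, fun n => ?_⟩
  rcases n.eq_zero_or_pos with rfl | hn
  · simp [hk]
  have ht : e * n.lcmUpto ^ s ≠ 0 := mul_ne_zero he (pow_ne_zero _ n.lcmUpto_ne_zero)
  have htr : e * n.lcmUpto ^ s ≤ 2 ^ (e + 9 * s * n) := by
    rw [pow_add, Nat.mul_assoc 9, Nat.mul_comm s, ← Nat.mul_assoc, pow_mul]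
    exact Nat.mul_le_mul Nat.lt_two_pow_self.le (Nat.pow_le_pow_left n.lcmUpto_le_two_pow s)
  have hlen : wordLength S (x ^ (e * n.lcmUpto ^ s)) ≤ (A + 1) * (e + 9 * s + 1) * n :=
    calc _ ≤ A * (e + 9 * s * n + 1) := hA _ _ ht htr
      _ ≤ (A + 1) * ((e + 9 * s + 1) * n) := Nat.mul_le_mul A.le_succ (by nlinarith)
      _ = (A + 1) * (e + 9 * s + 1) * n := (Nat.mul_assoc ..).symm
  have hx1 : x ^ (e * n.lcmUpto ^ s) ≠ 1 := fun h =>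
    hx (isOfFinOrder_iff_pow_eq_one.mpr ⟨_, Nat.pos_of_ne_zero ht, h⟩)
  calc (n : ℕ∞) ^ k ≤ (((n + 1) ^ k : ℕ) : ℕ∞) := by push_cast; gcongr; exact le_self_add
    _ ≤ depth (x ^ (e * n.lcmUpto ^ s)) := hdepth n hn
    _ ≤ rfGrowth S ((A + 1) * (e + 9 * s + 1) * n) := depth_le_rfGrowth S hx1 hlen
    _ ≤ _ := le_mul_of_one_le_left' (by exact_mod_cast Nat.one_le_iff_ne_zero.mpr (by positivity))

end Depth

theorem infinite_prufer_rank_lower_bound_general {G : Type*} [Group G] (S : Finset G)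
    (f : ℕ → ℕ) (hmono : Monotone f)
    (hlow : ∃ C : ℕ, 0 < C ∧ ∀ n : ℕ, 2 ^ n ≤ C * f (C * n))
    (x : G) (hord : ¬ IsOfFinOrder x)
    (hdist : StrictlyDistorted S f x) :
    (∃ C : ℕ, 0 < C ∧ ∀ n : ℕ, (n : ℕ∞) ≤ (C : ℕ∞) * rfGrowth S (C * n)) ∧
    (∀ m : ℕ, 1 < m →
      (∃ N : Subgroup G, N.Normal ∧ Group.IsNilpotent N ∧
        Subgroup.zpowers x ⊓ gammaSub N m ≠ ⊥) →
      ∃ C : ℕ, 0 < C ∧ ∀ n : ℕ, (n : ℕ∞) ^ (m + 1) ≤ (C : ℕ∞) * rfGrowth S (C * n)) := by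
  obtain ⟨C, -, hC⟩ := hlow
  refine ⟨?_, fun m hm ⟨N, _, hN, hxN⟩ => ?_⟩
  · simpa using exists_pow_le_rfGrowth S hmono hC hord hdist one_ne_zero one_ne_zero
      (s := 1) fun n _ => by simpa using le_depth_pow_lcmUpto x n
  · obtain ⟨e, he, hxe⟩ := Subgroup.exists_pow_mem_of_zpowers_inf_ne_bot hxN
    exact exists_pow_le_rfGrowth S hmono hC hord hdist he (by omega) fun n _ => by
      rw [pow_mul]
      exact le_depth_pow_lcmUpto_of_mem_gammaSub hN hm hxe n

/-- a residually finite, finitely generated solvable group of infinite Prüfer rank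
with a nontrivial infinite-order strictly `f`-distorted element `x ∈ Fitt(G)`, where
`2^n ≼ f(n) ≼ 2^(2^n)`, satisfies `n ≼ F_{G,S}(n)`; moreover if `x` has nilpotent depth `m > 1`
then `n^(m+1) ≼ F_{G,S}(n)`. -/
theorem infinite_prufer_rank_lower_bound {G : Type*} [Group G] (S : Finset G)
    (hgen : Subgroup.closure (S : Set G) = ⊤)
    (hRF : ResiduallyFinite G) (hsolv : IsSolvable G)
    (hrank : InfinitePruferRank G)
    (f : ℕ → ℕ) (hmono : Monotone f)
    (hlow : ∃ C : ℕ, 0 < C ∧ ∀ n : ℕ, 2 ^ n ≤ C * f (C * n))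
    (hup : ∃ C : ℕ, 0 < C ∧ ∀ n : ℕ, f n ≤ C * 2 ^ 2 ^ (C * n))
    (x : G) (hx : x ≠ 1) (hord : ¬ IsOfFinOrder x) (hxFitt : x ∈ fitt G)
    (hdist : StrictlyDistorted S f x) :
    (∃ C : ℕ, 0 < C ∧ ∀ n : ℕ, (n : ℕ∞) ≤ (C : ℕ∞) * rfGrowth S (C * n)) ∧
    (∀ m : ℕ, 1 < m →
      (∃ N : Subgroup G, N.Normal ∧ Group.IsNilpotent N ∧
        Subgroup.zpowers x ⊓ gammaSub N m ≠ ⊥) →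
      ∃ C : ℕ, 0 < C ∧ ∀ n : ℕ, (n : ℕ∞) ^ (m + 1) ≤ (C : ℕ∞) * rfGrowth S (C * n)) :=
  infinite_prufer_rank_lower_bound_general S f hmono hlow x hord hdist
end

section
/- Let G be a residually finite, finitely generated solvable group with a nontrivial element x ∈ Fitt(G), and let φ: G → H be a surjective homomorphism onto a finite group with φ(x) ≠ 1. Then there exist a prime number p and a normal subgroup K of H such that φ(x) ∉ K and the Fitting subgroup Fitt(H/K) is a finite p-group. -/
open Function

section Fitting

variable {Q : Type*} [Group Q] [Finite Q] {p : ℕ}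

lemma isPGroup_fitt_of_forall_isNilpotent
    (h : ∀ N : Subgroup Q, N.Normal → Group.IsNilpotent N → IsPGroup p N) :
    IsPGroup p (fitt Q) := by
  obtain ⟨M, ⟨hMnormal, hM⟩, hMmax⟩ := Set.Finite.exists_maximalFor id
    {M : Subgroup Q | M.Normal ∧ IsPGroup p M} (Set.toFinite _) ⟨⊥, inferInstance, .of_bot⟩
  refine hM.to_le (iSup_le fun N => iSup_le fun hN => iSup_le fun hnil => ?_)
  have hsup : (N ⊔ M).Normal ∧ IsPGroup p (N ⊔ M : Subgroup Q) :=
    ⟨Subgroup.sup_normal N M, (h N hN hnil).to_sup_of_normal_right hM⟩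
  exact le_sup_left.trans (hMmax hsup le_sup_right)

lemma isPGroup_of_isNilpotent_of_forall_normal_ne_bot_mem {y : Q}
    (hy : ∀ M : Subgroup Q, M.Normal → M ≠ ⊥ → y ∈ M) (hp : p.Prime) (hpy : p ∣ orderOf y)
    {N : Subgroup Q} [N.Normal] [Group.IsNilpotent N] : IsPGroup p N := by
  have := Fact.mk hp
  rw [IsPGroup.iff_card]
  refine ⟨_, Nat.eq_prime_pow_of_unique_prime_dvd Nat.card_pos.ne' fun {q} hq hqN => ?_⟩
  have := Fact.mk hq
  obtain ⟨P⟩ : Nonempty (Sylow q N) := inferInstance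
  have := P.characteristic_of_normal inferInstance
  have hyP : y ∈ (P : Subgroup N).map N.subtype := by
    refine hy _ inferInstance ?_
    rw [ne_eq, Subgroup.map_eq_bot_iff_of_injective _ N.subtype_injective]
    exact P.ne_bot_of_dvd_card hqN
  obtain ⟨k, hk⟩ := IsPGroup.iff_orderOf.mp (P.isPGroup'.map N.subtype) ⟨y, hyP⟩
  rw [Subgroup.orderOf_mk] at hk
  exact ((Nat.prime_dvd_prime_iff_eq hp hq).mp (hp.dvd_of_dvd_pow (hk ▸ hpy))).symm

lemma isPGroup_fitt_of_forall_normal_ne_bot_mem {y : Q}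
    (hy : ∀ M : Subgroup Q, M.Normal → M ≠ ⊥ → y ∈ M) (hp : p.Prime) (hpy : p ∣ orderOf y) :
    IsPGroup p (fitt Q) :=
  isPGroup_fitt_of_forall_isNilpotent fun _ _ _ =>
    isPGroup_of_isNilpotent_of_forall_normal_ne_bot_mem hy hp hpy

end Fitting

lemma Subgroup.exists_normal_notMem_forall_normal_ne_bot_mem {H : Type*} [Group H] [Finite H]
    {h : H} (hh : h ≠ 1) :
    ∃ (K : Subgroup H) (_ : K.Normal), h ∉ K ∧
      ∀ M : Subgroup (H ⧸ K), M.Normal → M ≠ ⊥ → (h : H ⧸ K) ∈ M := by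
  obtain ⟨K, ⟨hK, hhK⟩, hKmax⟩ := Set.Finite.exists_maximalFor id
    {K : Subgroup H | K.Normal ∧ h ∉ K} (Set.toFinite _) ⟨⊥, inferInstance, hh⟩
  refine ⟨K, hK, hhK, fun M hM hMbot => by_contra fun hhM => hMbot ?_⟩
  have hKM : K ≤ M.comap (QuotientGroup.mk' K) :=
    (QuotientGroup.ker_mk' K).symm.le.trans (MonoidHom.ker_le_comap _ _)
  rw [eq_bot_iff, ← M.map_comap_eq_self_of_surjective (QuotientGroup.mk'_surjective K),
    ← QuotientGroup.map_mk'_self K]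
  exact Subgroup.map_mono (hKmax ⟨hM.comap _, hhM⟩ hKM)

theorem special_p_quotient_general {G : Type*} [Group G] {H : Type*} [Group H] [Fintype H]
    (x : G) (φ : G →* H) (hφx : φ x ≠ 1) :
    ∃ (p : ℕ), p.Prime ∧ ∃ (K : Subgroup H) (_ : K.Normal),
      φ x ∉ K ∧ IsPGroup p (fitt (H ⧸ K)) := by
  obtain ⟨K, hK, hxK, hmin⟩ := Subgroup.exists_normal_notMem_forall_normal_ne_bot_mem hφx
  have hy : (φ x : H ⧸ K) ≠ 1 := by rwa [ne_eq, QuotientGroup.eq_one_iff]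
  obtain ⟨p, hp, hpy⟩ := Nat.exists_prime_and_dvd (orderOf_eq_one_iff.not.mpr hy)
  exact ⟨p, hp, K, hK, hxK, isPGroup_fitt_of_forall_normal_ne_bot_mem hmin hp hpy⟩

/-- if `G` is a residually finite, finitely generated solvable group, `x ∈ Fitt(G)`
is nontrivial, and `φ : G → H` is a surjection onto a finite group with `φ(x) ≠ 1`, then there
are a prime `p` and a normal subgroup `K ⊴ H` with `φ(x) ∉ K` such that `Fitt(H/K)` is a finite
`p`-group. -/
theorem special_p_quotient {G : Type*} [Group G] {H : Type*} [Group H] [Fintype H]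
    (hRF : ResiduallyFinite G) (hFG : Group.FG G) (hsolv : IsSolvable G)
    (x : G) (hx : x ≠ 1) (hxFitt : x ∈ fitt G)
    (φ : G →* H) (hsurj : Surjective φ) (hφx : φ x ≠ 1) :
    ∃ (p : ℕ), p.Prime ∧ ∃ (K : Subgroup H) (_ : K.Normal),
      φ x ∉ K ∧ IsPGroup p (fitt (H ⧸ K)) :=
  special_p_quotient_general x φ hφx
end

section
/- Let G be a finitely generated solvable group, let N be a nilpotent normal subgroup of G, let m ≥ 1, and let x be a nontrivial element of γ_m(N). Let φ: G → H be a surjective homomorphism onto a finite group with φ(x) ≠ 1 such that Fitt(H) is a finite p-group for a prime p. Then |H| ≥ p, and if m > 1, then |H| ≥ p^(m+1). -/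
/-!
The image `φ(N)` is a nilpotent normal subgroup of `H`, hence lies in `Fitt(H)` and is a
`p`-group, and `φ x ≠ 1` lies in `γ_m(φ(N))`. A finite `p`-group `P` with `γ_{c+1}(P) ≠ 1`,
`c ≥ 1`, has order at least `p^(c+2)`: passing to `P/Z(P)` lowers the class by one and divides the
order by `|Z(P)| ≥ p`, and in the base case `P/Z(P)` is a nontrivial `p`-group that is not
cyclic, so of order at least `p^2`. For `|H| ≥ p` it suffices that `Fitt(H) ≠ 1`, which holds
because the last nontrivial term of the derived series of the solvable group `H` is an abelian
normal subgroup.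
-/

open Function

theorem le_fitt {G : Type*} [Group G] {K : Subgroup G} (hK : K.Normal)
    (hKnilp : Group.IsNilpotent K) : K ≤ fitt G :=
  le_iSup_of_le K (le_iSup_of_le hK (le_iSup_of_le hKnilp le_rfl))

theorem gammaSub_eq_lowerCentralSeries {G : Type*} [Group G] (N : Subgroup G) (m : ℕ) :
    gammaSub N m = N.lowerCentralSeries (m - 1) :=
  Subgroup.top_subtype_lowerCentralSeries N (m - 1)

theorem exists_derivedSeries_ne_bot_succ_eq_bot {G : Type*} [Group G] [Group.IsSolvable G]
    [Nontrivial G] : ∃ n, derivedSeries G n ≠ ⊥ ∧ derivedSeries G (n + 1) = ⊥ := by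
  obtain ⟨n, hn⟩ := Group.IsSolvable.solvable (G := G)
  induction n with
  | zero => exact absurd hn (by simp [derivedSeries_zero])
  | succ n ih =>
    by_cases h : derivedSeries G n = ⊥
    · exact ih h
    · exact ⟨n, h, hn⟩

theorem exists_normal_isNilpotent_ne_bot {G : Type*} [Group G] [Group.IsSolvable G] [Nontrivial G] :
    ∃ K : Subgroup G, K.Normal ∧ Group.IsNilpotent K ∧ K ≠ ⊥ := by
  obtain ⟨n, hne, hbot⟩ := exists_derivedSeries_ne_bot_succ_eq_bot (G := G)
  exact ⟨derivedSeries G n, derivedSeries_normal G n,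
    Subgroup.isNilpotent_of_lowerCentralSeries_eq_bot (n := 1) hbot, hne⟩

namespace IsPGroup

variable {p : ℕ} [Fact p.Prime] {G : Type*} [Group G] [Finite G]

theorem prime_le_card [Nontrivial G] (hG : IsPGroup p G) : p ≤ Nat.card G := by
  obtain ⟨n, hn, hcard⟩ := (nontrivial_iff_card hG).mp inferInstance
  exact hcard ▸ Nat.le_self_pow hn.ne' p

theorem card_quotient_center_mul_prime_le_card [Nontrivial G] (hG : IsPGroup p G) :
    Nat.card (G ⧸ Subgroup.center G) * p ≤ Nat.card G := by
  have := hG.center_nontrivial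
  rw [Subgroup.card_eq_card_quotient_mul_card_subgroup (Subgroup.center G)]
  exact Nat.mul_le_mul_left _ (hG.to_subgroup _).prime_le_card

theorem sq_le_card_quotient_center (hG : IsPGroup p G) (hG' : ¬IsMulCommutative G) :
    p ^ 2 ≤ Nat.card (G ⧸ Subgroup.center G) := by
  have hQ := hG.to_quotient (Subgroup.center G)
  have : Nontrivial (G ⧸ Subgroup.center G) := by
    rw [QuotientGroup.nontrivial_iff, Ne, Subgroup.center_eq_top_iff]
    exact hG'
  obtain ⟨n, hn, hcard⟩ := (nontrivial_iff_card hQ).mp this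
  rcases Nat.lt_or_ge n 2 with hn2 | hn2
  · have : IsCyclic (G ⧸ Subgroup.center G) :=
      isCyclic_of_card_dvd_prime (p := p) (by rw [hcard, show n = 1 by omega, pow_one])
    exact absurd (isMulCommutative_of_isCyclic_quotient_center_self G) hG'
  · exact hcard ▸ Nat.pow_le_pow_right (Fact.out : p.Prime).pos hn2

end IsPGroup

theorem lowerCentralSeries_quotient_center_ne_bot {G : Type*} [Group G] {k : ℕ}
    (h : (⊤ : Subgroup G).lowerCentralSeries (k + 1) ≠ ⊥) :
    (⊤ : Subgroup (G ⧸ Subgroup.center G)).lowerCentralSeries k ≠ ⊥ := by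
  refine fun hbot ↦ h (Subgroup.lowerCentralSeries_succ_eq_bot ⊤ ?_)
  have hmap :=
    Subgroup.map_lowerCentralSeries (⊤ : Subgroup G) (QuotientGroup.mk' (Subgroup.center G)) k
  rw [← MonoidHom.range_eq_map, QuotientGroup.range_mk', hbot, Subgroup.map_eq_bot_iff,
    QuotientGroup.ker_mk'] at hmap
  exact hmap

theorem Subgroup.top_lowerCentralSeries_ne_bot_of_mem {G : Type*} [Group G] {S : Subgroup G}
    {n : ℕ} {g : G} (hg : g ∈ S.lowerCentralSeries n) (hg1 : g ≠ 1) :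
    (⊤ : Subgroup S).lowerCentralSeries n ≠ ⊥ := by
  rw [← S.top_subtype_lowerCentralSeries] at hg
  intro hbot
  rw [hbot, Subgroup.map_bot, Subgroup.mem_bot] at hg
  exact hg1 hg

theorem IsPGroup.pow_le_card_of_lowerCentralSeries_ne_bot {p : ℕ} [Fact p.Prime] {k : ℕ}
    (hk : 1 ≤ k) {G : Type*} [Group G] [Finite G] (hG : IsPGroup p G)
    (hγ : (⊤ : Subgroup G).lowerCentralSeries k ≠ ⊥) : p ^ (k + 2) ≤ Nat.card G := by
  induction k, hk using Nat.le_induction generalizing G with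
  | base =>
    have : Nontrivial G := Subgroup.nontrivial_iff.mp (nontrivial_of_ne _ _ hγ)
    have hG' : ¬IsMulCommutative G := by rwa [← Subgroup.lowerCentralSeries_one_eq_bot_iff]
    calc p ^ (1 + 2) = p ^ 2 * p := by ring
      _ ≤ Nat.card (G ⧸ Subgroup.center G) * p :=
        Nat.mul_le_mul_right p (hG.sq_le_card_quotient_center hG')
      _ ≤ Nat.card G := hG.card_quotient_center_mul_prime_le_card
  | succ k hk ih =>
    have : Nontrivial G := Subgroup.nontrivial_iff.mp (nontrivial_of_ne _ _ hγ)
    calc p ^ (k + 1 + 2) = p ^ (k + 2) * p := by ring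
      _ ≤ Nat.card (G ⧸ Subgroup.center G) * p := Nat.mul_le_mul_right p <|
        ih (hG.to_quotient _) (lowerCentralSeries_quotient_center_ne_bot hγ)
      _ ≤ Nat.card G := hG.card_quotient_center_mul_prime_le_card

theorem p_dim_lower_bound_general {G : Type*} [Group G] {H : Type*} [Group H] [Fintype H]
    (hsolv : IsSolvable G)
    (N : Subgroup G) (hN : N.Normal) (hNnilp : Group.IsNilpotent N)
    (m : ℕ) (x : G) (hxγ : x ∈ gammaSub N m)
    (φ : G →* H) (hsurj : Surjective φ) (hφx : φ x ≠ 1)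
    (p : ℕ) (hp : p.Prime) (hFitt : IsPGroup p (fitt H)) :
    p ≤ Fintype.card H ∧ (1 < m → p ^ (m + 1) ≤ Fintype.card H) := by
  have : Group.IsSolvable G := hsolv
  have : Group.IsSolvable H := Group.isSolvable_of_surjective hsurj
  have : Nontrivial H := ⟨⟨φ x, 1, hφx⟩⟩
  have : Fact p.Prime := ⟨hp⟩
  rw [← Nat.card_eq_fintype_card]
  constructor
  · obtain ⟨K, hK, hKnilp, hKne⟩ := exists_normal_isNilpotent_ne_bot (G := H)
    have : Nontrivial K := (Subgroup.nontrivial_iff_ne_bot K).mpr hKne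
    exact (hFitt.to_le (le_fitt hK hKnilp)).prime_le_card.trans (Subgroup.card_le_card_group K)
  · intro hm
    have hM : IsPGroup p (N.map φ) := hFitt.to_le <| le_fitt (hN.map φ hsurj)
      (Group.nilpotent_of_surjective (φ.subgroupMap N) (φ.subgroupMap_surjective N))
    have hφxγ : φ x ∈ (N.map φ).lowerCentralSeries (m - 1) := by
      rw [← Subgroup.map_lowerCentralSeries, ← gammaSub_eq_lowerCentralSeries]
      exact Subgroup.mem_map_of_mem φ hxγ
    calc p ^ (m + 1) = p ^ (m - 1 + 2) := by congr 1; omega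
      _ ≤ Nat.card (N.map φ) := hM.pow_le_card_of_lowerCentralSeries_ne_bot (by omega)
        (Subgroup.top_lowerCentralSeries_ne_bot_of_mem hφxγ hφx)
      _ ≤ Nat.card H := Subgroup.card_le_card_group _

/-- let `G` be a finitely generated solvable group, `N ⊴ G` nilpotent, `m ≥ 1`,
and `x ∈ γ_m(N)` nontrivial.  If `φ : G → H` is a surjection onto a finite group with
`φ(x) ≠ 1` and `Fitt(H)` a finite `p`-group, then `|H| ≥ p`, and if `m > 1` then
`|H| ≥ p^(m+1)`. -/
theorem p_dim_lower_bound {G : Type*} [Group G] {H : Type*} [Group H] [Fintype H]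
    (hFG : Group.FG G) (hsolv : IsSolvable G)
    (N : Subgroup G) (hN : N.Normal) (hNnilp : Group.IsNilpotent N)
    (m : ℕ) (hm : 1 ≤ m) (x : G) (hx : x ≠ 1) (hxγ : x ∈ gammaSub N m)
    (φ : G →* H) (hsurj : Surjective φ) (hφx : φ x ≠ 1)
    (p : ℕ) (hp : p.Prime) (hFitt : IsPGroup p (fitt H)) :
    p ≤ Fintype.card H ∧ (1 < m → p ^ (m + 1) ≤ Fintype.card H) :=
  p_dim_lower_bound_general hsolv N hN hNnilp m x hxγ φ hsurj hφx p hp hFitt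
end

section
/- (Fitting's theorem) Let G be a group and let H and K be nilpotent normal subgroups of G, of nilpotency classes c and d respectively. Then the subgroup H ⊔ K generated by H and K (which equals the product HK) is a nilpotent normal subgroup of G of nilpotency class at most c + d. -/
/-!
Write `γ_i` for the lower central series indexed so that `γ_1(H) = H`, with `γ_0(H) = G`.
By induction on `n`, `γ_n(H ⊔ K)` lies in the join of the `γ_i(H) ⊓ γ_j(K)` with `i + j = n`:
all these subgroups are normal, so the commutator with `H ⊔ K` can be bounded separately with `H`
and with `K`, and `⁅γ_i(H) ⊓ γ_j(K), H⁆ ≤ γ_{i+1}(H) ⊓ γ_j(K)` (symmetrically for `K`).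
When `n = c + d + 1`, each term has `i > c` or `j > d` and so vanishes.
-/

open scoped Pointwise

namespace Subgroup

variable {G : Type*} [Group G]

section CommutatorLe

variable {A L N : Subgroup G} [N.Normal]

/-- Makes `⁅·, L⁆ ≤ N` a condition closed under suprema. -/
theorem commutator_le_iff_le_comap_centralizer :
    ⁅A, L⁆ ≤ N ↔
      A ≤ (centralizer (L.map (QuotientGroup.mk' N) : Set (G ⧸ N))).comap
        (QuotientGroup.mk' N) := by
  rw [← map_le_iff_le_comap, ← commutator_eq_bot_iff_le_centralizer, ← map_commutator,
    map_eq_bot_iff, QuotientGroup.ker_mk']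

theorem iSup_commutator_le_iff {ι : Sort*} {A : ι → Subgroup G} :
    ⁅⨆ i, A i, L⁆ ≤ N ↔ ∀ i, ⁅A i, L⁆ ≤ N := by
  simp only [commutator_le_iff_le_comap_centralizer, iSup_le_iff]

theorem commutator_sup_le_iff {L₁ L₂ : Subgroup G} :
    ⁅A, L₁ ⊔ L₂⁆ ≤ N ↔ ⁅A, L₁⁆ ≤ N ∧ ⁅A, L₂⁆ ≤ N := by
  simp only [commutator_comm A, commutator_le_iff_le_comap_centralizer, sup_le_iff]

end CommutatorLe

/-- `H.gamma i = γ_i(H)` with `γ_1(H) = H`, padded by `γ_0(H) = ⊤`. -/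
def gamma (H : Subgroup G) : ℕ → Subgroup G
  | 0 => ⊤
  | n + 1 => H.lowerCentralSeries n

variable {H K : Subgroup G}

instance gamma_normal [H.Normal] : ∀ i, (H.gamma i).Normal
  | 0 => inferInstanceAs (⊤ : Subgroup G).Normal
  | n + 1 => inferInstanceAs (H.lowerCentralSeries n).Normal

theorem gamma_antitone (H : Subgroup G) : Antitone H.gamma := by
  refine antitone_nat_of_succ_le fun n => ?_
  cases n with
  | zero => exact le_top
  | succ n => exact H.lowerCentralSeries_antitone n.le_succ

theorem commutator_gamma_le [H.Normal] : ∀ i, ⁅H.gamma i, H⁆ ≤ H.gamma (i + 1)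
  | 0 => commutator_le_right ⊤ H
  | _ + 1 => le_rfl

theorem commutator_gamma_inf_gamma_le [H.Normal] [K.Normal] (i j : ℕ) :
    ⁅H.gamma i ⊓ K.gamma j, H⁆ ≤ H.gamma (i + 1) ⊓ K.gamma j :=
  le_inf ((commutator_mono inf_le_left le_rfl).trans (commutator_gamma_le i))
    ((commutator_mono inf_le_right le_rfl).trans (commutator_le_left _ _))

def mixedLowerCentralSeries (H K : Subgroup G) (n : ℕ) : Subgroup G :=
  ⨆ (i) (j) (_ : i + j = n + 1), H.gamma i ⊓ K.gamma j

instance mixedLowerCentralSeries_normal [H.Normal] [K.Normal] (n : ℕ) :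
    (mixedLowerCentralSeries H K n).Normal := by
  unfold mixedLowerCentralSeries; infer_instance

theorem gamma_inf_gamma_le_mixedLowerCentralSeries {i j n : ℕ} (h : i + j = n + 1) :
    H.gamma i ⊓ K.gamma j ≤ mixedLowerCentralSeries H K n :=
  le_iSup₂_of_le i j (le_iSup_of_le h le_rfl)

theorem mixedLowerCentralSeries_le_comm (n : ℕ) :
    mixedLowerCentralSeries H K n ≤ mixedLowerCentralSeries K H n :=
  iSup₂_le fun _ _ => iSup_le fun hij =>
    (inf_comm _ _).trans_le (gamma_inf_gamma_le_mixedLowerCentralSeries ((add_comm _ _).trans hij))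

theorem mixedLowerCentralSeries_comm (H K : Subgroup G) (n : ℕ) :
    mixedLowerCentralSeries H K n = mixedLowerCentralSeries K H n :=
  le_antisymm (mixedLowerCentralSeries_le_comm n) (mixedLowerCentralSeries_le_comm n)

theorem commutator_mixedLowerCentralSeries_le [H.Normal] [K.Normal] (n : ℕ) :
    ⁅mixedLowerCentralSeries H K n, H⁆ ≤ mixedLowerCentralSeries H K (n + 1) :=
  iSup_commutator_le_iff.2 fun i => iSup_commutator_le_iff.2 fun j => iSup_commutator_le_iff.2
    fun hij => (commutator_gamma_inf_gamma_le i j).trans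
      (gamma_inf_gamma_le_mixedLowerCentralSeries (by omega))

theorem lowerCentralSeries_sup_le_mixedLowerCentralSeries [H.Normal] [K.Normal] (n : ℕ) :
    (H ⊔ K).lowerCentralSeries n ≤ mixedLowerCentralSeries H K n := by
  induction n with
  | zero =>
    refine sup_le ?_ ?_
    · simpa [gamma] using
        gamma_inf_gamma_le_mixedLowerCentralSeries (H := H) (K := K) (i := 1) (j := 0) rfl
    · simpa [gamma] using
        gamma_inf_gamma_le_mixedLowerCentralSeries (H := H) (K := K) (i := 0) (j := 1) rfl
  | succ n ih =>
    refine (commutator_mono ih le_rfl).trans (commutator_sup_le_iff.2 ⟨?_, ?_⟩)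
    · exact commutator_mixedLowerCentralSeries_le n
    · simpa only [mixedLowerCentralSeries_comm H K] using commutator_mixedLowerCentralSeries_le n

theorem mixedLowerCentralSeries_eq_bot {c d : ℕ} (hH : H.lowerCentralSeries c = ⊥)
    (hK : K.lowerCentralSeries d = ⊥) : mixedLowerCentralSeries H K (c + d) = ⊥ :=
  eq_bot_iff.2 <| iSup₂_le fun i j => iSup_le fun hij => by
    rcases le_or_gt (c + 1) i with hi | hi
    · exact inf_le_left.trans ((H.gamma_antitone hi).trans hH.le)
    · exact inf_le_right.trans ((K.gamma_antitone (by omega : d + 1 ≤ j)).trans hK.le)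

theorem lowerCentralSeries_sup_eq_bot [H.Normal] [K.Normal] {c d : ℕ}
    (hH : H.lowerCentralSeries c = ⊥) (hK : K.lowerCentralSeries d = ⊥) :
    (H ⊔ K).lowerCentralSeries (c + d) = ⊥ :=
  eq_bot_iff.2 <| (lowerCentralSeries_sup_le_mixedLowerCentralSeries _).trans
    (mixedLowerCentralSeries_eq_bot hH hK).le

theorem top_lowerCentralSeries_eq_bot_iff (H : Subgroup G) (n : ℕ) :
    (⊤ : Subgroup H).lowerCentralSeries n = ⊥ ↔ H.lowerCentralSeries n = ⊥ := by
  rw [← map_eq_bot_iff_of_injective _ H.subtype_injective, top_subtype_lowerCentralSeries]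

end Subgroup

theorem fitting_theorem_general {G : Type*} [Group G] (H K : Subgroup G)
    (hHn : H.Normal) (hKn : K.Normal)
    (c d : ℕ)
    (hHc : (⊤ : Subgroup ↥H).lowerCentralSeries c = ⊥)
    (hKd : (⊤ : Subgroup ↥K).lowerCentralSeries d = ⊥) :
    ((H ⊔ K : Subgroup G) : Set G) = (H : Set G) * (K : Set G) ∧
    (H ⊔ K).Normal ∧ Group.IsNilpotent ↥(H ⊔ K) ∧
    (⊤ : Subgroup ↥(H ⊔ K)).lowerCentralSeries (c + d) = ⊥ := by
  have hHK : (H ⊔ K).lowerCentralSeries (c + d) = ⊥ :=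
    Subgroup.lowerCentralSeries_sup_eq_bot
      ((Subgroup.top_lowerCentralSeries_eq_bot_iff H c).1 hHc)
      ((Subgroup.top_lowerCentralSeries_eq_bot_iff K d).1 hKd)
  exact ⟨Subgroup.mul_normal H K, Subgroup.sup_normal H K,
    (Subgroup.isNilpotent_iff_lowerCentralSeries _).2 ⟨_, hHK⟩,
    (Subgroup.top_lowerCentralSeries_eq_bot_iff _ _).2 hHK⟩

/-- Fitting's theorem: if `H` and `K` are nilpotent normal subgroups of `G`, of
nilpotency classes `c` and `d` respectively (class `c` means `γ_{c+1} = 1` and `γ_c ≠ 1`, i.e.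
`lowerCentralSeries _ c = ⊥` is first attained at `c`), then `H ⊔ K` equals the product `HK`
and is a nilpotent normal subgroup of nilpotency class at most `c + d`. -/
theorem fitting_theorem {G : Type*} [Group G] (H K : Subgroup G)
    (hHn : H.Normal) (hKn : K.Normal)
    (c d : ℕ)
    (hHc : (⊤ : Subgroup ↥H).lowerCentralSeries c = ⊥) (hHc' : ∀ c' : ℕ, (⊤ : Subgroup ↥H).lowerCentralSeries c' = ⊥ → c ≤ c')
    (hKd : (⊤ : Subgroup ↥K).lowerCentralSeries d = ⊥) (hKd' : ∀ d' : ℕ, (⊤ : Subgroup ↥K).lowerCentralSeries d' = ⊥ → d ≤ d') :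
    ((H ⊔ K : Subgroup G) : Set G) = (H : Set G) * (K : Set G) ∧
    (H ⊔ K).Normal ∧ Group.IsNilpotent ↥(H ⊔ K) ∧
    (⊤ : Subgroup ↥(H ⊔ K)).lowerCentralSeries (c + d) = ⊥ :=
  fitting_theorem_general H K hHn hKn c d hHc hKd
end

section
/- There exist constants c, C > 0 such that for all natural numbers n ≥ 2, c·n ≤ log(lcm{1, 2, …, n}) ≤ C·n. (Equivalently, log of the least common multiple of the first n natural numbers grows linearly in n.) -/
/-!
`log (lcm {1, …, n})` is Chebyshev's function `ψ n`, so the upper bound is Chebyshev's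
`ψ x ≤ (log 4 + 4) x`. For the lower bound, every `n.choose k` divides the lcm, whence
`2 ^ n ≤ (n + 1) · lcm`; since `n` divides the lcm, the factor `n + 1 ≤ n ^ 2` costs only a
square of the lcm, leaving `2 ^ n ≤ lcm ^ 3`.
-/

/-- `lcm {1, …, n}` -/
def lcmUpTo (k : ℕ) : ℕ := (Finset.Icc 1 k).lcm id

open Real

namespace Nat

theorem self_le_lcmUpto (n : ℕ) : n ≤ lcmUpto n := by
  rcases n.eq_zero_or_pos with rfl | hn
  · exact Nat.zero_le _
  · exact le_of_dvd (lcmUpto_pos n) (Finset.dvd_lcm (Finset.mem_Icc.2 ⟨hn, le_rfl⟩))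

theorem two_pow_le_lcmUpto_pow_three {n : ℕ} (hn : 2 ≤ n) : 2 ^ n ≤ lcmUpto n ^ 3 :=
  calc 2 ^ n ≤ (n + 1) * lcmUpto n := Chebyshev.two_pow_le_mul_lcmUpto n
    _ ≤ n ^ 2 * lcmUpto n := by gcongr; nlinarith
    _ ≤ lcmUpto n ^ 2 * lcmUpto n := by gcongr; exact self_le_lcmUpto n
    _ = lcmUpto n ^ 3 := by ring

end Nat

theorem lcmUpTo_eq_lcmUpto : lcmUpTo = Nat.lcmUpto := rfl

/-- Prime Number Theorem bound: `log (lcm {1, …, n})` grows linearly in `n`. -/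
theorem log_lcm_linear :
    ∃ c C : ℝ, 0 < c ∧ 0 < C ∧ ∀ n : ℕ, 2 ≤ n →
      c * n ≤ Real.log (lcmUpTo n) ∧ Real.log (lcmUpTo n) ≤ C * n := by
  refine ⟨log 2 / 3, log 4 + 4, by positivity, by positivity, fun n hn ↦ ⟨?_, ?_⟩⟩
  · have hpow : ((2 : ℕ) ^ n : ℝ) ≤ (lcmUpTo n : ℝ) ^ 3 := by
      exact_mod_cast Nat.two_pow_le_lcmUpto_pow_three hn
    have hlog := log_le_log (by positivity) hpow
    rw [log_pow, log_pow] at hlog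
    push_cast at hlog
    linarith
  · rw [lcmUpTo_eq_lcmUpto, ← Chebyshev.psi_eq_log_lcmUpto]
    exact Chebyshev.psi_le_const_mul_self n.cast_nonneg
end

section
/- Let G be a residually finite group with finite generating set S, and suppose G contains an element of infinite order. Then log n ≼ F_{G,S}(n): there is a constant C > 0 such that for every n ≥ 2 there is a nontrivial element g ∈ G with ‖g‖_S ≤ C·n such that every finite group H admitting a surjective homomorphism φ: G → H with φ(g) ≠ 1 satisfies |H| ≥ (log n)/C. -/
/-! The element `g = x ^ lcm(1, …, m)` is killed by every group of order at most `m`, so its depth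
exceeds `m`; Chebyshev's bound `log lcm(1, …, m) = ψ(m) = O(m)` keeps its word length linear in
`n` as long as `m ≍ log n`. -/

open Function

open Real Chebyshev

section WordLength

variable {G : Type*} [Group G] {S : Finset G}

lemma wordLength_prod_le {l : List G} (hl : ∀ g ∈ l, g ∈ S ∨ g⁻¹ ∈ S) :
    wordLength S l.prod ≤ l.length :=
  Nat.sInf_le ⟨l, hl, rfl, rfl⟩

lemma exists_word_length_eq_wordLength (hgen : Subgroup.closure (S : Set G) = ⊤) (x : G) :
    ∃ l : List G, (∀ g ∈ l, g ∈ S ∨ g⁻¹ ∈ S) ∧ l.length = wordLength S x ∧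
      l.prod = x := by
  change wordLength S x ∈
    {n | ∃ l : List G, (∀ g ∈ l, g ∈ S ∨ g⁻¹ ∈ S) ∧ l.length = n ∧ l.prod = x}
  apply Nat.sInf_mem
  have hx : x ∈ Submonoid.closure ((S : Set G) ∪ (S : Set G)⁻¹) := by
    rw [← Subgroup.closure_toSubmonoid, hgen]
    exact Subgroup.mem_top x
  obtain ⟨l, hl, rfl⟩ := Submonoid.exists_list_of_mem_closure hx
  exact ⟨l.length, l, fun g hg => (hl g hg).imp id Set.mem_inv.mp, rfl, rfl⟩

lemma wordLength_mul_le (hgen : Subgroup.closure (S : Set G) = ⊤) (x y : G) :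
    wordLength S (x * y) ≤ wordLength S x + wordLength S y := by
  obtain ⟨l₁, hl₁, hlen₁, rfl⟩ := exists_word_length_eq_wordLength hgen x
  obtain ⟨l₂, hl₂, hlen₂, rfl⟩ := exists_word_length_eq_wordLength hgen y
  rw [← hlen₁, ← hlen₂, ← List.length_append, ← List.prod_append]
  exact wordLength_prod_le fun g hg => (List.mem_append.mp hg).elim (hl₁ g) (hl₂ g)

lemma wordLength_pow_le (hgen : Subgroup.closure (S : Set G) = ⊤) (x : G) (k : ℕ) :
    wordLength S (x ^ k) ≤ k * wordLength S x := by
  induction k with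
  | zero => simpa using wordLength_prod_le (S := S) (l := []) (by simp)
  | succ k ih =>
    calc wordLength S (x ^ (k + 1)) ≤ wordLength S (x ^ k) + wordLength S x := by
          rw [pow_succ]; exact wordLength_mul_le hgen _ _
      _ ≤ (k + 1) * wordLength S x := by rw [add_one_mul]; gcongr

end WordLength

lemma pow_lcmUpto_eq_one_of_orderOf_le {M : Type*} [Monoid M] {h : M} {m : ℕ}
    (hh : IsOfFinOrder h) (hm : orderOf h ≤ m) : h ^ Nat.lcmUpto m = 1 :=
  orderOf_dvd_iff_pow_eq_one.mp <| Finset.dvd_lcm (Finset.mem_Icc.mpr ⟨hh.orderOf_pos, hm⟩)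

lemma pow_lcmUpto_eq_one_of_card_le {H : Type*} [Group H] [Fintype H] (h : H) {m : ℕ}
    (hm : Fintype.card H ≤ m) : h ^ Nat.lcmUpto m = 1 :=
  pow_lcmUpto_eq_one_of_orderOf_le (isOfFinOrder_of_finite h) (orderOf_le_card_univ.trans hm)

lemma lcmUpto_le_of_mul_le_log {m n : ℕ} (hn : 0 < n) (h : (log 4 + 4) * m ≤ log n) :
    Nat.lcmUpto m ≤ n := by
  have hlog : log (Nat.lcmUpto m) ≤ log n := by
    rw [← psi_eq_log_lcmUpto]
    exact (psi_le_const_mul_self m.cast_nonneg).trans h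
  exact_mod_cast (log_le_log_iff (by exact_mod_cast Nat.lcmUpto_pos m) (by exact_mod_cast hn)).mp
    hlog

theorem log_lower_bound_general {G : Type*} [Group G] (S : Finset G)
    (hgen : Subgroup.closure (S : Set G) = ⊤)
    (x : G) (hx : ¬ IsOfFinOrder x) :
    ∃ C : ℝ, 0 < C ∧ ∀ n : ℕ, 2 ≤ n → ∃ g : G, g ≠ 1 ∧
      (wordLength S g : ℝ) ≤ C * n ∧
      ∀ (H : Type) [Group H] [Fintype H] (φ : G →* H),
        Surjective φ → φ g ≠ 1 → Real.log n / C ≤ Fintype.card H := by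
  have hc : 0 < log 4 + 4 := by positivity
  refine ⟨wordLength S x + (log 4 + 4), by positivity, fun n hn => ?_⟩
  set m := ⌊log n / (log 4 + 4)⌋₊
  have hlog : 0 ≤ log n := log_nonneg (by exact_mod_cast (by omega : 1 ≤ n))
  have hL : Nat.lcmUpto m ≤ n := lcmUpto_le_of_mul_le_log (by omega) <| by
    rw [mul_comm, ← le_div_iff₀ hc]; exact Nat.floor_le (by positivity)
  refine ⟨x ^ Nat.lcmUpto m, fun h => hx ?_, ?_, ?_⟩
  · exact isOfFinOrder_iff_pow_eq_one.mpr ⟨_, Nat.lcmUpto_pos m, h⟩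
  · calc (wordLength S (x ^ Nat.lcmUpto m) : ℝ) ≤ Nat.lcmUpto m * wordLength S x := by
          exact_mod_cast wordLength_pow_le hgen x _
      _ ≤ n * wordLength S x := by gcongr
      _ ≤ (wordLength S x + (log 4 + 4)) * n := by nlinarith
  · intro H _ _ φ _ hφ
    have hm : m + 1 ≤ Fintype.card H := by
      by_contra! hle
      exact hφ (by rw [map_pow, pow_lcmUpto_eq_one_of_card_le _ (Nat.lt_succ_iff.mp hle)])
    rw [div_le_iff₀ (by positivity)]
    calc log n ≤ (m + 1) * (log 4 + 4) := by
          rw [← div_le_iff₀ hc]; exact (Nat.lt_floor_add_one _).le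
      _ ≤ Fintype.card H * (wordLength S x + (log 4 + 4)) := by
          gcongr ?_ * ?_
          · exact_mod_cast hm
          · exact le_add_of_nonneg_left (Nat.cast_nonneg _)

/-- a residually finite group with an infinite-order element satisfies
`log n ≼ F_{G,S}(n)`. -/
theorem log_lower_bound {G : Type*} [Group G] (S : Finset G)
    (hgen : Subgroup.closure (S : Set G) = ⊤)
    (hRF : ResiduallyFinite G) (x : G) (hx : ¬ IsOfFinOrder x) :
    ∃ C : ℝ, 0 < C ∧ ∀ n : ℕ, 2 ≤ n → ∃ g : G, g ≠ 1 ∧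
      (wordLength S g : ℝ) ≤ C * n ∧
      ∀ (H : Type) [Group H] [Fintype H] (φ : G →* H),
        Surjective φ → φ g ≠ 1 → Real.log n / C ≤ Fintype.card H :=
  log_lower_bound_general S hgen x hx
end
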